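/- Let p = 2r be an even positive integer. For z ∈ ℂ and 1 ≤ m ≤ r define the polynomials q_{m,j}(z) by the recursion q_{m,0}(z) = 0, q_{m,1}(z) = 1, and q_{m,j}(z) = (z/m)·q_{m,j−1}(z) + q_{m,j−2}(z) for 2 ≤ j ≤ 2m. If 1 ≤ r ≤ 8, then for all integers m, ℓ with 1 ≤ m ≤ r and 1 ≤ ℓ ≤ 2m, and for every z ∈ ℂ with |∑_{k=0}^{p} z^k/k!| ≤ 1, one has (2·m^{2r}/((r−m)!·(r+m)!)) · |q_{m,2m−ℓ+1}(z)| < √(2/π) · 4.74^p/√p; and if r ≥ 9 the same quantity is strictly less than 4.986^p/(π·√(p−1)). -/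

import Mathlib

/-!
Every root of the truncated exponential `∑_{k ≤ p} z^k/k!` has modulus at most `p`
(Eneström–Kakeya applied in the variable `z/p`, where the coefficients `p^k/k!` increase), so on
the stability region `(|z| - p)^p ≤ p!`; with `p = 2r` this gives `|z| ≤ 3r` for `r ≥ 3` (as
`(2r)! ≤ r^{2r}`) and `|z| ≤ 7r/2` for `r ≤ 2`.

If `|z| ≤ κr`, put `s = κr/m` and `λ = s + 1/s`. Then `(|z|/m)λ + 1 ≤ λ²`, so the recursion gives
`|q_{m,j+1}(z)| ≤ λ^j`, and `λ ≤ Kr/m` with `K = κ + 1/κ`. Using `(2r)! ≤ (2r)^{r-m}(r+m)!`, the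
factor `(2r/K²)^{r-m}/(r-m)!` is at most `exp(2r/K²)`, and Stirling's lower bound for `(2r)!`
turns the amplification bound into `W^{2r}/(K√(πr))` with `W = K e^{1 + 1/K²}/2`. For `κ = 3`
(`K = 10/3`) one has `W < 4.986`, and for `κ = 7/2` (`K = 53/14`) `W < 5.54`; for `r ≤ 8` it then
remains to compare `W^{2r}` with `K · 4.74^{2r}`.
-/

open Finset Polynomial Real
open scoped Nat

theorem sub_one_mul_sum_range_mul_pow {R : Type*} [CommRing R] (b : ℕ → R) (w : R) (n : ℕ) :
    (w - 1) * ∑ i ∈ range (n + 1), b i * w ^ i =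
      b n * w ^ (n + 1) - b 0 - ∑ i ∈ range n, (b (i + 1) - b i) * w ^ (i + 1) := by
  induction n with
  | zero => simp; ring
  | succ n ih =>
    rw [sum_range_succ, mul_add, ih, sum_range_succ]
    ring

/-- Eneström–Kakeya. -/
theorem norm_le_one_of_sum_mul_pow_eq_zero {n : ℕ} {b : ℕ → ℝ} (hb0 : 0 ≤ b 0)
    (hb : ∀ i < n, b i ≤ b (i + 1)) (hbn : 0 < b n) {w : ℂ}
    (hw : ∑ i ∈ range (n + 1), (b i : ℂ) * w ^ i = 0) : ‖w‖ ≤ 1 := by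
  by_contra! hw1
  have hid := sub_one_mul_sum_range_mul_pow (fun i ↦ (b i : ℂ)) w n
  rw [hw, mul_zero, eq_comm, sub_sub, sub_eq_zero] at hid
  have hle : b n * ‖w‖ ^ (n + 1) ≤ b n * ‖w‖ ^ n :=
    calc b n * ‖w‖ ^ (n + 1)
        = ‖(b 0 : ℂ) + ∑ i ∈ range n, (b (i + 1) - b i : ℂ) * w ^ (i + 1)‖ := by
          rw [← hid, norm_mul, norm_pow, Complex.norm_real, Real.norm_of_nonneg hbn.le]
      _ ≤ b 0 + ∑ i ∈ range n, (b (i + 1) - b i) * ‖w‖ ^ (i + 1) := by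
          refine (norm_add_le _ _).trans (add_le_add ?_ ((norm_sum_le _ _).trans ?_))
          · rw [Complex.norm_real, Real.norm_of_nonneg hb0]
          · refine sum_le_sum fun i hi ↦ ?_
            rw [← Complex.ofReal_sub, norm_mul, norm_pow, Complex.norm_real,
              Real.norm_of_nonneg (sub_nonneg.2 (hb i (mem_range.1 hi)))]
      _ ≤ b 0 * ‖w‖ ^ n + ∑ i ∈ range n, (b (i + 1) - b i) * ‖w‖ ^ n := by
          refine add_le_add (le_mul_of_one_le_right hb0 (one_le_pow₀ hw1.le))
            (sum_le_sum fun i hi ↦ ?_)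
          have hi := mem_range.1 hi
          exact mul_le_mul_of_nonneg_left (pow_le_pow_right₀ hw1.le hi) (sub_nonneg.2 (hb i hi))
      _ = b n * ‖w‖ ^ n := by rw [← sum_mul, sum_range_sub b n]; ring
  exact ((le_of_mul_le_mul_left hle hbn).trans_lt (pow_lt_pow_right₀ hw1 n.lt_succ_self)).false

theorem norm_le_of_sum_pow_div_factorial_eq_zero {p : ℕ} {ρ : ℂ}
    (h : ∑ i ∈ range (p + 1), ρ ^ i / (i ! : ℂ) = 0) : ‖ρ‖ ≤ p := by
  rcases p.eq_zero_or_pos with rfl | hp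
  · simp at h
  have hp' : (0 : ℝ) < p := by exact_mod_cast hp
  have hw : ∑ i ∈ range (p + 1), (((p : ℝ) ^ i / i ! : ℝ) : ℂ) * (ρ / p) ^ i = 0 := by
    rw [← h]
    refine sum_congr rfl fun i _ ↦ ?_
    have : (p : ℂ) ≠ 0 := by exact_mod_cast hp.ne'
    push_cast
    rw [div_pow]
    field_simp
  have hmono : ∀ i < p, (p : ℝ) ^ i / i ! ≤ (p : ℝ) ^ (i + 1) / (i + 1)! := by
    intro i hi
    rw [Nat.factorial_succ, Nat.cast_mul, pow_succ, div_le_div_iff₀ (by positivity) (by positivity)]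
    have : ((i + 1 : ℕ) : ℝ) ≤ p := by exact_mod_cast hi
    have : (0 : ℝ) ≤ (p : ℝ) ^ i * i ! := by positivity
    nlinarith
  have := norm_le_one_of_sum_mul_pow_eq_zero (b := fun i ↦ (p : ℝ) ^ i / i !) (by positivity)
    hmono (by positivity) hw
  rwa [norm_div, Complex.norm_natCast, div_le_one hp'] at this

theorem Polynomial.norm_leadingCoeff_mul_pow_le_norm_eval (P : ℂ[X]) {R : ℝ}
    (hR : ∀ a ∈ P.roots, ‖a‖ ≤ R) {z : ℂ} (hz : R ≤ ‖z‖) :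
    ‖P.leadingCoeff‖ * (‖z‖ - R) ^ P.natDegree ≤ ‖P.eval z‖ := by
  conv_rhs => rw [← P.C_leadingCoeff_mul_prod_multiset_X_sub_C IsAlgClosed.card_roots_eq_natDegree]
  rw [eval_mul, eval_C, eval_multiset_prod, norm_mul, ← IsAlgClosed.card_roots_eq_natDegree,
    Multiset.map_map, ← Multiset.prod_replicate, ← Multiset.map_const']
  have hnorm := map_multiset_prod (normHom : ℂ →*₀ ℝ) (P.roots.map (eval z ∘ fun a ↦ X - C a))
  simp only [normHom_apply, Multiset.map_map] at hnorm
  rw [hnorm]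
  gcongr
  refine Multiset.prod_map_le_prod_map₀ _ _ (fun _ _ ↦ sub_nonneg.2 hz) fun a ha ↦ ?_
  have := norm_sub_norm_le z a
  simp only [Function.comp_apply, eval_sub, eval_X, eval_C]
  linarith [hR a ha]

noncomputable def expTrunc (p : ℕ) : ℂ[X] := ∑ i ∈ range (p + 1), C (i ! : ℂ)⁻¹ * X ^ i

theorem eval_expTrunc (p : ℕ) (z : ℂ) :
    (expTrunc p).eval z = ∑ i ∈ range (p + 1), z ^ i / (i ! : ℂ) := by
  simp [expTrunc, eval_finsetSum, div_eq_inv_mul]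

theorem coeff_expTrunc (p i : ℕ) : (expTrunc p).coeff i = if i ≤ p then (i ! : ℂ)⁻¹ else 0 := by
  simp [expTrunc, coeff_X_pow]

theorem natDegree_expTrunc (p : ℕ) : (expTrunc p).natDegree = p :=
  natDegree_eq_of_le_of_coeff_ne_zero
    (natDegree_le_iff_coeff_eq_zero.2 fun i hi ↦ by
      rw [coeff_expTrunc, if_neg (by exact_mod_cast hi.not_ge)])
    (by simp [coeff_expTrunc, Nat.factorial_ne_zero])

theorem leadingCoeff_expTrunc (p : ℕ) : (expTrunc p).leadingCoeff = (p ! : ℂ)⁻¹ := by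
  rw [leadingCoeff, natDegree_expTrunc, coeff_expTrunc, if_pos le_rfl]

theorem norm_le_of_mem_roots_expTrunc {p : ℕ} {ρ : ℂ} (hρ : ρ ∈ (expTrunc p).roots) :
    ‖ρ‖ ≤ p :=
  norm_le_of_sum_pow_div_factorial_eq_zero <| by
    rw [← eval_expTrunc]; exact (mem_roots'.1 hρ).2

theorem pow_sub_le_factorial_of_norm_sum_pow_div_factorial_le_one {p : ℕ} {z : ℂ}
    (hz : ‖∑ i ∈ range (p + 1), z ^ i / (i ! : ℂ)‖ ≤ 1) (hpz : p ≤ ‖z‖) :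
    (‖z‖ - p) ^ p ≤ p ! := by
  have := (expTrunc p).norm_leadingCoeff_mul_pow_le_norm_eval
    (fun _ ↦ norm_le_of_mem_roots_expTrunc) hpz
  rw [leadingCoeff_expTrunc, natDegree_expTrunc, eval_expTrunc, norm_inv, Complex.norm_natCast,
    inv_mul_le_iff₀ (by positivity)] at this
  exact this.trans (by simpa using mul_le_mul_of_nonneg_left hz (by positivity : (0:ℝ) ≤ p !))

theorem norm_le_add_of_norm_sum_pow_div_factorial_le_one {p : ℕ} (hp : p ≠ 0) {z : ℂ}
    (hz : ‖∑ i ∈ range (p + 1), z ^ i / (i ! : ℂ)‖ ≤ 1) {t : ℝ} (ht : 0 ≤ t)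
    (hpt : (p ! : ℝ) ≤ t ^ p) : ‖z‖ ≤ p + t := by
  by_contra! hzt
  have := pow_sub_le_factorial_of_norm_sum_pow_div_factorial_le_one hz (by linarith)
  exact (pow_lt_pow_left₀ (show t < ‖z‖ - p by linarith) ht hp).not_ge (this.trans hpt)

theorem two_mul_pow_le_add_one_pow {r : ℕ} (hr : r ≠ 0) : 2 * (r : ℝ) ^ r ≤ (r + 1) ^ r := by
  have hr' : (r : ℝ) ≠ 0 := by exact_mod_cast hr
  have h := one_add_mul_le_pow (a := (r : ℝ)⁻¹)
    (by linarith [(by positivity : (0 : ℝ) ≤ (r : ℝ)⁻¹)]) r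
  rw [mul_inv_cancel₀ hr', one_add_one_eq_two] at h
  calc 2 * (r : ℝ) ^ r ≤ (1 + (r : ℝ)⁻¹) ^ r * r ^ r := by gcongr
    _ = (r + 1) ^ r := by rw [← mul_pow, add_mul, one_mul, inv_mul_cancel₀ hr', add_comm]

theorem factorial_two_mul_le_pow {r : ℕ} (hr : 3 ≤ r) : ((2 * r)! : ℝ) ≤ r ^ (2 * r) := by
  induction r, hr using Nat.le_induction with
  | base => norm_num [Nat.factorial]
  | succ r hr ih =>
    have h2 := two_mul_pow_le_add_one_pow (r := r) (by omega)
    calc ((2 * (r + 1))! : ℝ) = (2 * r + 1) * (2 * r + 2) * (2 * r)! := by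
          rw [show 2 * (r + 1) = 2 * r + 1 + 1 by ring, Nat.factorial_succ, Nat.factorial_succ]
          push_cast; ring
      _ ≤ (2 * r + 1) * (2 * r + 2) * (r ^ r) ^ 2 := by rw [← pow_mul']; gcongr
      _ ≤ (2 * (r + 1)) ^ 2 * (r ^ r) ^ 2 := by gcongr; nlinarith
      _ = (r + 1) ^ 2 * (2 * r ^ r) ^ 2 := by ring
      _ ≤ (r + 1) ^ 2 * ((r + 1) ^ r) ^ 2 := by gcongr
      _ = ((r + 1 : ℕ) : ℝ) ^ (2 * (r + 1)) := by push_cast; ring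

theorem norm_le_three_mul_of_norm_sum_pow_div_factorial_le_one {r : ℕ} (hr : 3 ≤ r) {z : ℂ}
    (hz : ‖∑ k ∈ range (2 * r + 1), z ^ k / (k ! : ℂ)‖ ≤ 1) : ‖z‖ ≤ 3 * r := by
  have := norm_le_add_of_norm_sum_pow_div_factorial_le_one (by omega) hz r.cast_nonneg
    (factorial_two_mul_le_pow hr)
  push_cast at this
  linarith

theorem norm_le_seven_halves_mul_of_norm_sum_pow_div_factorial_le_one {r : ℕ} (hr : r ≠ 0)
    {z : ℂ} (hz : ‖∑ k ∈ range (2 * r + 1), z ^ k / (k ! : ℂ)‖ ≤ 1) : ‖z‖ ≤ 7 / 2 * r := by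
  rcases le_or_gt 3 r with hr3 | hr3
  · linarith [norm_le_three_mul_of_norm_sum_pow_div_factorial_le_one hr3 hz,
      (r.cast_nonneg : (0 : ℝ) ≤ r)]
  have := norm_le_add_of_norm_sum_pow_div_factorial_le_one (by omega) hz (t := 3 / 2 * r)
    (by positivity) (by interval_cases r <;> norm_num [Nat.factorial])
  push_cast at this
  linarith

theorem norm_succ_le_pow_of_recurrence {u : ℕ → ℂ} {c : ℂ} {N : ℕ} {lam : ℝ} (hlam : 0 < lam)
    (hc : ‖c‖ * lam + 1 ≤ lam ^ 2) (h0 : u 0 = 0) (h1 : u 1 = 1)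
    (hrec : ∀ j, j + 2 ≤ N → u (j + 2) = c * u (j + 1) + u j) {j : ℕ} (hj : j < N) :
    ‖u (j + 1)‖ ≤ lam ^ j := by
  suffices ∀ j < N, lam * ‖u j‖ ≤ lam ^ j ∧ ‖u (j + 1)‖ ≤ lam ^ j from (this j hj).2
  intro j hj
  induction j with
  | zero => simp [h0, h1]
  | succ j ih =>
    obtain ⟨hj0, hj1⟩ := ih (by omega)
    refine ⟨by rw [pow_succ']; gcongr, ?_⟩
    have hstep : lam * ‖u (j + 2)‖ ≤ lam ^ (j + 2) :=
      calc lam * ‖u (j + 2)‖ ≤ lam * (‖c‖ * ‖u (j + 1)‖ + ‖u j‖) := by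
            rw [hrec j hj, ← norm_mul]; gcongr; exact norm_add_le _ _
        _ ≤ lam * (‖c‖ * lam ^ j) + lam ^ j := by
            rw [mul_add]; exact add_le_add (by gcongr) hj0
        _ = lam ^ j * (‖c‖ * lam + 1) := by ring
        _ ≤ lam ^ (j + 2) := by rw [pow_add]; gcongr
    rw [pow_succ' lam (j + 1)] at hstep
    exact le_of_mul_le_mul_left hstep hlam

theorem mul_add_inv_add_one_le_sq {x s : ℝ} (hs : 0 < s) (hx : x ≤ s) :
    x * (s + s⁻¹) + 1 ≤ (s + s⁻¹) ^ 2 := by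
  have : x * (s + s⁻¹) ≤ s * (s + s⁻¹) := by gcongr
  have : s * (s + s⁻¹) = s ^ 2 + 1 := by field_simp
  have : (s + s⁻¹) ^ 2 = s ^ 2 + 2 + s⁻¹ ^ 2 := by field_simp; ring
  nlinarith [sq_nonneg s⁻¹]

theorem two_le_add_inv {s : ℝ} (hs : 0 < s) : 2 ≤ s + s⁻¹ := by
  have : s * s⁻¹ = 1 := mul_inv_cancel₀ hs.ne'
  nlinarith [sq_nonneg (s - 1), inv_pos.2 hs]

theorem Nat.factorial_le_pow_mul_factorial_sub (n k : ℕ) (hk : k ≤ n) : n ! ≤ n ^ k * (n - k)! := by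
  rw [← Nat.factorial_mul_descFactorial hk, mul_comm]
  exact Nat.mul_le_mul_right _ (Nat.descFactorial_le_pow n k)

theorem two_mul_pow_mul_pow_div_factorial_le {r m : ℕ} (hm : 1 ≤ m) (hmr : m ≤ r) {K lam : ℝ}
    (hK : 0 < K) (hlam0 : 0 ≤ lam) (hlam : lam ≤ K * r / m) :
    2 * (m : ℝ) ^ (2 * r) * lam ^ (2 * m - 1) / ((r - m)! * (r + m)!) ≤
      2 / K * (K * r) ^ (2 * r) * exp (2 * r / K ^ 2) / (2 * r)! := by
  set k := r - m
  have hm0 : (0 : ℝ) < m := by exact_mod_cast hm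
  have hmr' : (m : ℝ) ≤ r := by exact_mod_cast hmr
  have hr0 : (0 : ℝ) < r := hm0.trans_le hmr'
  have hexp : 2 * r = (2 * k + 1) + (2 * m - 1) := by omega
  have hnum : (m : ℝ) ^ (2 * r) * lam ^ (2 * m - 1) ≤ (K * r) ^ (2 * r) / K ^ (2 * k + 1) :=
    calc (m : ℝ) ^ (2 * r) * lam ^ (2 * m - 1)
        ≤ (m : ℝ) ^ (2 * r) * (K * r / m) ^ (2 * m - 1) := by gcongr
      _ = (m : ℝ) ^ (2 * k + 1) * (K * r) ^ (2 * m - 1) := by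
          rw [hexp, pow_add, div_pow]; field_simp
      _ ≤ (r : ℝ) ^ (2 * k + 1) * (K * r) ^ (2 * m - 1) := by gcongr
      _ = (K * r) ^ (2 * r) / K ^ (2 * k + 1) := by
          rw [eq_div_iff (by positivity), hexp, pow_add (K * r), mul_pow K (r : ℝ) (2 * k + 1)]
          ring
  have hden : ((2 * r)! : ℝ) ≤ (2 * r : ℝ) ^ k * (r + m)! := by
    have := Nat.factorial_le_pow_mul_factorial_sub (2 * r) k (by omega)
    rw [show 2 * r - k = r + m by omega] at this
    exact_mod_cast this
  have hk : (2 * r / K ^ 2) ^ k / k ! ≤ exp (2 * r / K ^ 2) :=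
    pow_div_factorial_le_exp _ (by positivity) k
  calc 2 * (m : ℝ) ^ (2 * r) * lam ^ (2 * m - 1) / (k ! * (r + m)!)
      ≤ 2 * ((K * r) ^ (2 * r) / K ^ (2 * k + 1)) / (k ! * (r + m)!) := by
        rw [mul_assoc]; gcongr
    _ = 2 / K * (K * r) ^ (2 * r) * ((2 * r / K ^ 2) ^ k / k !) / ((2 * r : ℝ) ^ k * (r + m)!) := by
        have : (2 * r : ℝ) ^ k ≠ 0 := pow_ne_zero _ (by positivity)
        rw [div_pow]; field_simp; ring
    _ ≤ 2 / K * (K * r) ^ (2 * r) * exp (2 * r / K ^ 2) / (2 * r)! := by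
        gcongr

noncomputable def growthBase (K : ℝ) : ℝ := K * exp 1 * exp (K ^ 2)⁻¹ / 2

theorem growthBase_pos {K : ℝ} (hK : 0 < K) : 0 < growthBase K := by
  unfold growthBase; positivity

theorem mul_pow_mul_exp_div_factorial_le {r : ℕ} (hr : r ≠ 0) {K : ℝ} (hK : 0 < K) :
    2 / K * (K * r) ^ (2 * r) * exp (2 * r / K ^ 2) / (2 * r)! ≤
      growthBase K ^ (2 * r) / (K * √(π * r)) := by
  have hr' : (0 : ℝ) < r := by exact_mod_cast Nat.pos_of_ne_zero hr
  have hstirling := Stirling.le_factorial_stirling (2 * r)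
  have hsqrt : √(2 * π * ((2 * r : ℕ) : ℝ)) = 2 * √(π * r) := by
    rw [show 2 * π * ((2 * r : ℕ) : ℝ) = 2 ^ 2 * (π * r) by push_cast; ring,
      sqrt_mul (by norm_num), sqrt_sq (by norm_num)]
  have hexp : exp (2 * r / K ^ 2) = exp (K ^ 2)⁻¹ ^ (2 * r) := by
    rw [← exp_nat_mul]; push_cast; ring_nf
  rw [hsqrt] at hstirling
  have : 0 < √(π * r) := by positivity
  calc 2 / K * (K * r) ^ (2 * r) * exp (2 * r / K ^ 2) / (2 * r)!
      ≤ 2 / K * (K * r) ^ (2 * r) * exp (2 * r / K ^ 2) /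
          (2 * √(π * r) * (((2 * r : ℕ) : ℝ) / exp 1) ^ (2 * r)) := by gcongr
    _ = growthBase K ^ (2 * r) / (K * √(π * r)) := by
        rw [growthBase, hexp]; push_cast; rw [div_pow, mul_pow, div_pow, mul_pow, mul_pow, mul_pow]
        field_simp

theorem growthBase_lt {K : ℝ} (hK : 1 < K) :
    growthBase K < K * 2.7182818286 / (2 * (1 - (K ^ 2)⁻¹)) := by
  have hx : (K ^ 2)⁻¹ < 1 := inv_lt_one_of_one_lt₀ (one_lt_pow₀ hK two_ne_zero)
  have hexp := exp_bound_div_one_sub_of_interval (inv_nonneg.2 (sq_nonneg K)) hx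
  calc growthBase K = K / 2 * exp 1 * exp (K ^ 2)⁻¹ := by rw [growthBase]; ring
    _ < K / 2 * 2.7182818286 * exp (K ^ 2)⁻¹ := by gcongr; exact exp_one_lt_d9
    _ ≤ K / 2 * 2.7182818286 * (1 / (1 - (K ^ 2)⁻¹)) := by gcongr
    _ = K * 2.7182818286 / (2 * (1 - (K ^ 2)⁻¹)) := by field_simp


theorem growthBase_pow_div_lt_sqrt_two_div_pi {K c : ℝ} {r n : ℕ} (hr : r ≠ 0) (hrn : r ≤ n)
    (hK : 0 < K) (hW : growthBase K < c) (hc : 4.74 ≤ c) (hcK : (c / 4.74) ^ (2 * n) ≤ K) :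
    growthBase K ^ (2 * r) / (K * √(π * r)) < √(2 / π) * 4.74 ^ (2 * r) / √(2 * r) := by
  have hr' : (0 : ℝ) < r := by exact_mod_cast Nat.pos_of_ne_zero hr
  have hsqrt : √(2 * r) = √(2 / π) * √(π * r) := by
    rw [← sqrt_mul (by positivity)]; congr 1; field_simp
  have hpow : c ^ (2 * r) ≤ K * 4.74 ^ (2 * r) :=
    calc c ^ (2 * r) = (c / 4.74) ^ (2 * r) * 4.74 ^ (2 * r) := by rw [div_pow]; field_simp
      _ ≤ (c / 4.74) ^ (2 * n) * 4.74 ^ (2 * r) := by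
          gcongr
          rw [le_div_iff₀ (by norm_num)]; linarith
      _ ≤ K * 4.74 ^ (2 * r) := by gcongr
  have := growthBase_pos hK
  calc growthBase K ^ (2 * r) / (K * √(π * r)) < c ^ (2 * r) / (K * √(π * r)) := by
        gcongr
    _ ≤ K * 4.74 ^ (2 * r) / (K * √(π * r)) := by gcongr
    _ = √(2 / π) * 4.74 ^ (2 * r) / √(2 * r) := by
        rw [hsqrt, mul_div_mul_left _ _ hK.ne', mul_div_mul_left _ _ (by positivity)]

theorem growthBase_pow_div_lt_div_pi_mul_sqrt {K c : ℝ} {r : ℕ} (hr : r ≠ 0) (hK : 0 < K)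
    (hK2 : 2 * π ≤ K ^ 2) (hW : growthBase K < c) :
    growthBase K ^ (2 * r) / (K * √(π * r)) < c ^ (2 * r) / (π * √(2 * r - 1)) := by
  have hr' : (1 : ℝ) ≤ r := by exact_mod_cast Nat.one_le_iff_ne_zero.2 hr
  have hpi : π * √(2 * r - 1) ≤ K * √(π * r) := by
    refine (pow_le_pow_iff_left₀ (by positivity) (by positivity) two_ne_zero).1 ?_
    rw [mul_pow, mul_pow, sq_sqrt (by linarith), sq_sqrt (by positivity)]
    nlinarith [mul_le_mul_of_nonneg_right hK2 (by positivity : (0 : ℝ) ≤ π * r), pi_pos]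
  have := growthBase_pos hK
  have : 0 < c := this.trans hW
  calc growthBase K ^ (2 * r) / (K * √(π * r)) < c ^ (2 * r) / (K * √(π * r)) := by
        gcongr
    _ ≤ c ^ (2 * r) / (π * √(2 * r - 1)) := by
        have : 0 < √(2 * (r : ℝ) - 1) := sqrt_pos.2 (by linarith)
        gcongr

theorem amplification_le_growthBase (q : ℕ → ℕ → ℂ → ℂ) (hq0 : ∀ m z, q m 0 z = 0)
    (hq1 : ∀ m z, q m 1 z = 1)
    (hqrec : ∀ m j z, 2 ≤ j → j ≤ 2 * m → q m j z = (z / m) * q m (j - 1) z + q m (j - 2) z)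
    {r m ℓ : ℕ} (hm : 1 ≤ m) (hmr : m ≤ r) (hℓ : 1 ≤ ℓ) {κ : ℝ} (hκ : 0 < κ) {z : ℂ}
    (hz : ‖z‖ ≤ κ * r) :
    2 * (m : ℝ) ^ (2 * r) / ((r - m)! * (r + m)!) * ‖q m (2 * m - ℓ + 1) z‖ ≤
      growthBase (κ + κ⁻¹) ^ (2 * r) / ((κ + κ⁻¹) * √(π * r)) := by
  have hm0 : (0 : ℝ) < m := by exact_mod_cast hm
  have hmr' : (m : ℝ) ≤ r := by exact_mod_cast hmr
  have hr0 : (0 : ℝ) < r := hm0.trans_le hmr'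
  set s := κ * r / m
  have hs : 0 < s := by positivity
  have hlam1 : 1 ≤ s + s⁻¹ := by linarith [two_le_add_inv hs]
  have hzs : ‖z / m‖ ≤ s := by
    rw [norm_div, Complex.norm_natCast]; exact div_le_div_of_nonneg_right hz hm0.le
  have hq : ‖q m (2 * m - ℓ + 1) z‖ ≤ (s + s⁻¹) ^ (2 * m - 1) :=
    (norm_succ_le_pow_of_recurrence (u := fun j ↦ q m j z) (by positivity)
      (mul_add_inv_add_one_le_sq hs hzs) (hq0 m z) (hq1 m z)
      (fun j hj ↦ by simpa using hqrec m (j + 2) z (by omega) hj) (by omega)).trans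
      (pow_le_pow_right₀ hlam1 (by omega))
  have hlam : s + s⁻¹ ≤ (κ + κ⁻¹) * r / m :=
    calc s + s⁻¹ = κ * r / m + κ⁻¹ * (m / r) := by simp only [s]; field_simp
      _ ≤ κ * r / m + κ⁻¹ * (r / m) := by gcongr
      _ = (κ + κ⁻¹) * r / m := by ring
  calc 2 * (m : ℝ) ^ (2 * r) / ((r - m)! * (r + m)!) * ‖q m (2 * m - ℓ + 1) z‖
      ≤ 2 * (m : ℝ) ^ (2 * r) * (s + s⁻¹) ^ (2 * m - 1) / ((r - m)! * (r + m)!) :=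
        (mul_le_mul_of_nonneg_left hq (by positivity)).trans_eq (by ring)
    _ ≤ 2 / (κ + κ⁻¹) * ((κ + κ⁻¹) * r) ^ (2 * r) * exp (2 * r / (κ + κ⁻¹) ^ 2) / (2 * r)! :=
        two_mul_pow_mul_pow_div_factorial_le hm hmr (by positivity) (by positivity) hlam
    _ ≤ growthBase (κ + κ⁻¹) ^ (2 * r) / ((κ + κ⁻¹) * √(π * r)) :=
        mul_pow_mul_exp_div_factorial_le (by omega) (by positivity)

/-- **Theorem 4.17.** Bounds on the maximum internal amplification factor of the
explicit midpoint extrapolation method of (even) order `p = 2r` over its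
absolute stability region `S_p = {z : |∑_{k=0}^p z^k/k!| ≤ 1}`.  The internal
stability polynomials are, up to sign,
`(2 m^{2r}/((r−m)!(r+m)!)) · q_{m,2m−ℓ+1}(z)` with `q_{m,0} = 0`, `q_{m,1} = 1`,
`q_{m,j}(z) = (z/m)q_{m,j−1}(z) + q_{m,j−2}(z)`.  For `1 ≤ r ≤ 8` the factor is
`< √(2/π)·4.74^p/√p`, and for `r ≥ 9` it is `< 4.986^p/(π·√(p−1))`. -/
theorem midpoint_extrapolation_amplification_bound
    (r : ℕ) (hr : 1 ≤ r) (p : ℕ) (hp : p = 2 * r)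
    (q : ℕ → ℕ → ℂ → ℂ)
    (hq0 : ∀ m z, q m 0 z = 0)
    (hq1 : ∀ m z, q m 1 z = 1)
    (hqrec : ∀ m j z, 2 ≤ j → j ≤ 2 * m →
      q m j z = (z / m) * q m (j - 1) z + q m (j - 2) z) :
    (r ≤ 8 → ∀ m ℓ : ℕ, 1 ≤ m → m ≤ r → 1 ≤ ℓ → ℓ ≤ 2 * m → ∀ z : ℂ,
      ‖∑ k ∈ Finset.range (p + 1), z ^ k / (Nat.factorial k : ℂ)‖ ≤ 1 →
      2 * (m : ℝ) ^ (2 * r) / ((Nat.factorial (r - m) : ℝ) * (Nat.factorial (r + m) : ℝ)) *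
          ‖q m (2 * m - ℓ + 1) z‖ <
        Real.sqrt (2 / Real.pi) * 4.74 ^ p / Real.sqrt p) ∧
    (9 ≤ r → ∀ m ℓ : ℕ, 1 ≤ m → m ≤ r → 1 ≤ ℓ → ℓ ≤ 2 * m → ∀ z : ℂ,
      ‖∑ k ∈ Finset.range (p + 1), z ^ k / (Nat.factorial k : ℂ)‖ ≤ 1 →
      2 * (m : ℝ) ^ (2 * r) / ((Nat.factorial (r - m) : ℝ) * (Nat.factorial (r + m) : ℝ)) *
          ‖q m (2 * m - ℓ + 1) z‖ <
        4.986 ^ p / (Real.pi * Real.sqrt ((p : ℝ) - 1))) := by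
  subst hp
  have hr0 : r ≠ 0 := by omega
  refine ⟨fun hr8 m ℓ hm hmr hℓ _ z hz ↦ ?_, fun hr9 m ℓ hm hmr hℓ _ z hz ↦ ?_⟩
  · push_cast
    rcases lt_or_ge r 3 with hr3 | hr3
    · refine (amplification_le_growthBase q hq0 hq1 hqrec hm hmr hℓ (by norm_num)
        (norm_le_seven_halves_mul_of_norm_sum_pow_div_factorial_le_one hr0 hz)).trans_lt ?_
      exact growthBase_pow_div_lt_sqrt_two_div_pi (c := 5.54) (n := 2) hr0 (by omega)
        (by norm_num) ((growthBase_lt (by norm_num)).trans_le (by norm_num)) (by norm_num)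
        (by norm_num)
    · refine (amplification_le_growthBase q hq0 hq1 hqrec hm hmr hℓ (by norm_num)
        (norm_le_three_mul_of_norm_sum_pow_div_factorial_le_one hr3 hz)).trans_lt ?_
      exact growthBase_pow_div_lt_sqrt_two_div_pi (c := 4.986) (n := 8) hr0 hr8
        (by norm_num) ((growthBase_lt (by norm_num)).trans_le (by norm_num)) (by norm_num)
        (by norm_num)
  · push_cast
    refine (amplification_le_growthBase q hq0 hq1 hqrec hm hmr hℓ (by norm_num)
      (norm_le_three_mul_of_norm_sum_pow_div_factorial_le_one (by omega) hz)).trans_lt ?_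
    exact growthBase_pow_div_lt_div_pi_mul_sqrt hr0 (by norm_num)
      (by nlinarith [pi_lt_d2]) ((growthBase_lt (by norm_num)).trans_le (by norm_num))
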